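/- arXiv:1903.05442 — 8 statements merged into one kernel-verified Lean document; each statement's English description precedes it below -/
import Mathlib

section
/- Let k ≥ 2 and n ≥ 1, and let w be a word of length N = k^n over the alphabet Σ_k such that γ_n(w) = k^n (i.e., w is an ordinary circular de Bruijn word of order n). Then γ_i(w) = min(k^i, k^n) for all i with 0 ≤ i ≤ k^n; that is, w is a generalized de Bruijn word. -/
/-! Taking length-`i` prefixes maps the circular factors of length `m ≥ i` onto those of length
`i`. So if all `k ^ n` words of length `n` occur, every shorter word occurs too, while for `i ≥ n`
the count `γ_i` is squeezed between `γ_n = k ^ n` and the length `k ^ n` of `w`. -/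

open Finset

def gamma {k : ℕ} (w : List (Fin k)) (i : ℕ) : ℕ :=
  ((Finset.range w.length).image (fun j => ((w ++ w).drop j).take i)).card

variable {α : Type*} [DecidableEq α]

section Words

variable (α) [Fintype α]

def words (m : ℕ) : Finset (List α) :=
  univ.image (List.Vector.toList (n := m))

variable {α}

@[simp]
theorem mem_words {m : ℕ} {u : List α} : u ∈ words α m ↔ u.length = m :=
  ⟨fun hu ↦ by obtain ⟨v, -, rfl⟩ := mem_image.1 hu; exact v.toList_length,
    fun hu ↦ mem_image.2 ⟨⟨u, hu⟩, mem_univ _, rfl⟩⟩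

theorem card_words (m : ℕ) : (words α m).card = Fintype.card α ^ m := by
  rw [words, card_image_of_injective _ List.Vector.toList_injective, card_univ, card_vector]

theorem image_take_words [Nonempty α] {i m : ℕ} (h : i ≤ m) :
    (words α m).image (List.take i) = words α i := by
  ext u
  simp only [mem_image, mem_words]
  constructor
  · rintro ⟨v, hv, rfl⟩
    simp [hv, h]
  · intro hu
    obtain ⟨a⟩ := ‹Nonempty α›
    refine ⟨u ++ List.replicate (m - i) a, by simp; omega, ?_⟩
    rw [← hu, List.take_left]

end Words

section CircularFactors

variable {w : List α} {i m : ℕ}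

def circularFactors (w : List α) (i : ℕ) : Finset (List α) :=
  (range w.length).image fun j ↦ ((w ++ w).drop j).take i

theorem gamma_eq_card_circularFactors {k : ℕ} (w : List (Fin k)) (i : ℕ) :
    gamma w i = (circularFactors w i).card :=
  rfl

theorem card_circularFactors_le_length : (circularFactors w i).card ≤ w.length :=
  card_image_le.trans (card_range _).le

theorem image_take_circularFactors (h : i ≤ m) :
    (circularFactors w m).image (List.take i) = circularFactors w i := by
  simp only [circularFactors, image_image, Function.comp_def, List.take_take, min_eq_left h]

theorem card_circularFactors_mono (h : i ≤ m) :
    (circularFactors w i).card ≤ (circularFactors w m).card := by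
  rw [← image_take_circularFactors h]
  exact card_image_le

theorem circularFactors_subset_words [Fintype α] (hi : i ≤ w.length) :
    circularFactors w i ⊆ words α i := by
  intro u hu
  obtain ⟨j, hj, rfl⟩ := mem_image.1 hu
  rw [mem_range] at hj
  simp only [mem_words, List.length_take, List.length_drop, List.length_append]
  omega

theorem circularFactors_eq_words [Fintype α] [Nonempty α] {n : ℕ} (hn : n ≤ w.length)
    (hcard : (circularFactors w n).card = Fintype.card α ^ n) (hi : i ≤ n) :
    circularFactors w i = words α i := by
  have hall : circularFactors w n = words α n :=
    eq_of_subset_of_card_le (circularFactors_subset_words hn) (by rw [card_words, hcard])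
  rw [← image_take_circularFactors hi, hall, image_take_words hi]

end CircularFactors

theorem stmt_1_general (k n : ℕ) (hk : 2 ≤ k)
    (w : List (Fin k)) (hw : w.length = k ^ n)
    (hdb : gamma w n = k ^ n) :
    ∀ i ≤ k ^ n, gamma w i = min (k ^ i) (k ^ n) := by
  intro i hi
  have : Nonempty (Fin k) := ⟨⟨0, by omega⟩⟩
  have hn : n ≤ w.length := hw ▸ (Nat.lt_pow_self hk).le
  rw [gamma_eq_card_circularFactors] at hdb ⊢
  rcases le_total i n with hin | hni
  · rw [min_eq_left (Nat.pow_le_pow_right (by omega) hin),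
      circularFactors_eq_words hn (by rwa [Fintype.card_fin]) hin, card_words, Fintype.card_fin]
  · rw [min_eq_right (Nat.pow_le_pow_right (by omega) hni)]
    exact le_antisymm (hw ▸ card_circularFactors_le_length) (hdb ▸ card_circularFactors_mono hni)

theorem stmt_1 (k n : ℕ) (hk : 2 ≤ k) (hn : 1 ≤ n)
    (w : List (Fin k)) (hw : w.length = k ^ n)
    (hdb : gamma w n = k ^ n) :
    ∀ i ≤ k ^ n, gamma w i = min (k ^ i) (k ^ n) :=
  stmt_1_general k n hk w hw hdb
end

section
/- Let k ≥ 2, let N ≥ 1, let w be a word of length N over Σ_k, and set r = ⌊log_k N⌋. Then w is a generalized de Bruijn word if and only if both γ_r(w) = k^r and γ_{r+1}(w) = N. -/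
/-- A word `w` over `Σ_k` is a generalized de Bruijn word if
`γ_i(w) = min (k^i, |w|)` for all `0 ≤ i ≤ |w|`. -/
def IsGenDeBruijn {k : ℕ} (w : List (Fin k)) : Prop :=
  ∀ i ≤ w.length, gamma w i = min (k ^ i) w.length

/-- At `j + 1 = |w|` the factor wraps around to the one starting at `0`; this needs `i ≤ |w|`. -/
lemma take_drop_succ_mem_image {α : Type*} [DecidableEq α] (w : List α) {i j : ℕ}
    (hi : i ≤ w.length) (hj : j < w.length) :
    ((w ++ w).drop (j + 1)).take i ∈
      (Finset.range w.length).image (fun j => ((w ++ w).drop j).take i) := by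
  rw [Finset.mem_image]
  by_cases h : j + 1 < w.length
  · exact ⟨j + 1, Finset.mem_range.2 h, rfl⟩
  · refine ⟨0, Finset.mem_range.2 (by omega), ?_⟩
    rw [show j + 1 = w.length by omega, List.drop_left, List.drop_zero,
      List.take_append_of_le_length hi]

namespace gamma

variable {k : ℕ} (w : List (Fin k))

lemma le_length (i : ℕ) : gamma w i ≤ w.length :=
  Finset.card_image_le.trans (by simp)

lemma zero_le_one : gamma w 0 ≤ 1 := by
  refine Finset.card_le_one.2 fun a ha b hb => ?_
  simp only [Finset.mem_image, List.take_zero] at ha hb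
  obtain ⟨_, _, rfl⟩ := ha
  obtain ⟨_, _, rfl⟩ := hb
  rfl

lemma monotone : Monotone (gamma w) := by
  refine monotone_nat_of_le_succ fun i => ?_
  have htake : (Finset.range w.length).image (fun j => ((w ++ w).drop j).take i) =
      ((Finset.range w.length).image
        (fun j => ((w ++ w).drop j).take (i + 1))).image (List.take i) := by
    rw [Finset.image_image]
    exact Finset.image_congr fun j _ => by simp [List.take_take]
  unfold gamma
  rw [htake]
  exact Finset.card_image_le

lemma succ_le_mul {i : ℕ} (hi : i ≤ w.length) : gamma w (i + 1) ≤ k * gamma w i := by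
  set F := (Finset.range w.length).image (fun j => ((w ++ w).drop j).take i)
  have hsub : (Finset.range w.length).image (fun j => ((w ++ w).drop j).take (i + 1)) ⊆
      (Finset.univ ×ˢ F).image (fun p : Fin k × List (Fin k) => p.1 :: p.2) := by
    intro s hs
    obtain ⟨j, hj, rfl⟩ := Finset.mem_image.1 hs
    rw [Finset.mem_range] at hj
    have hjlen : j < (w ++ w).length := by simp; omega
    rw [List.drop_eq_getElem_cons hjlen, List.take_succ_cons]
    exact Finset.mem_image.2 ⟨((w ++ w)[j], _), Finset.mem_product.2
      ⟨Finset.mem_univ _, take_drop_succ_mem_image w hi hj⟩, rfl⟩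
  calc gamma w (i + 1) ≤ ((Finset.univ ×ˢ F).image
          (fun p : Fin k × List (Fin k) => p.1 :: p.2)).card := Finset.card_le_card hsub
    _ ≤ (Finset.univ ×ˢ F).card := Finset.card_image_le
    _ = k * gamma w i := by simp [Finset.card_product, F, gamma]

lemma add_le_pow_mul {i d : ℕ} (h : i + d ≤ w.length) :
    gamma w (i + d) ≤ k ^ d * gamma w i := by
  induction d with
  | zero => simp
  | succ d ih =>
    calc gamma w (i + d + 1) ≤ k * gamma w (i + d) := succ_le_mul w (by omega)
      _ ≤ k * (k ^ d * gamma w i) := Nat.mul_le_mul_left k (ih (by omega))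
      _ = k ^ (d + 1) * gamma w i := by ring

lemma le_pow {i : ℕ} (hi : i ≤ w.length) : gamma w i ≤ k ^ i := by
  simpa using (add_le_pow_mul w (i := 0) (by simpa using hi)).trans
    (Nat.mul_le_mul_left _ (zero_le_one w))

lemma eq_pow_of_le (hk : 0 < k) {i j : ℕ} (hij : i ≤ j) (hj : j ≤ w.length)
    (h : gamma w j = k ^ j) : gamma w i = k ^ i := by
  refine le_antisymm (le_pow w (hij.trans hj))
    (Nat.le_of_mul_le_mul_left ?_ (pow_pos hk (j - i)))
  calc k ^ (j - i) * k ^ i = gamma w (i + (j - i)) := by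
        rw [← pow_add, Nat.sub_add_cancel hij, Nat.add_sub_cancel' hij, h]
    _ ≤ k ^ (j - i) * gamma w i := add_le_pow_mul w (by omega)

end gamma

theorem stmt_2 (k N : ℕ) (hk : 2 ≤ k) (hN : 1 ≤ N)
    (w : List (Fin k)) (hw : w.length = N)
    (r : ℕ) (hr : r = Nat.log k N) :
    IsGenDeBruijn w ↔ (gamma w r = k ^ r ∧ gamma w (r + 1) = N) := by
  subst hw hr
  have hpow_le : k ^ Nat.log k w.length ≤ w.length := Nat.pow_log_le_self k (by omega)
  have hlt : w.length < k ^ (Nat.log k w.length + 1) := Nat.lt_pow_succ_log_self hk _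
  have hlog_lt : Nat.log k w.length < w.length := (Nat.lt_pow_self hk).trans_le hpow_le
  constructor
  · intro h
    exact ⟨(h _ hlog_lt.le).trans (min_eq_left hpow_le),
      (h _ hlog_lt).trans (min_eq_right hlt.le)⟩
  · rintro ⟨hr, hr_succ⟩ i hi
    rcases le_or_gt i (Nat.log k w.length) with hir | hir
    · rw [min_eq_left ((Nat.pow_le_pow_right (by omega) hir).trans hpow_le)]
      exact gamma.eq_pow_of_le w (by omega) hir hlog_lt.le hr
    · rw [min_eq_right (hlt.trans_le (Nat.pow_le_pow_right (by omega) hir)).le]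
      exact le_antisymm (gamma.le_length w i) (hr_succ ▸ gamma.monotone w hir)
end

section
/- Let k ≥ 2 and n ≥ 1. Let S be a subset of Σ_k^n and let g : S → S be a bijection such that every pair (x, g(x)) is an edge of the de Bruijn graph G_n^k (i.e., the length-(n−1) suffix of x equals the length-(n−1) prefix of g(x)); in particular this covers the case where g is a single cycle of G_n^k. Then there exists a permutation π of all of Σ_k^n extending g such that every pair (x, π(x)) is an edge of G_n^k. Equivalently, every cycle of G_n^k can be completed to a 2-factor of G_n^k. -/
/-!
Write a word of length `m + 1` as `a :: t`. Its out-neighbours in the de Bruijn graph are the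
words `t ++ [b]`, and distinct `a` give distinct in-neighbours of each `t ++ [b]`. So for each
middle word `t`, the bijection `g` induces a partial injection `a ↦ b` of the alphabet, which
extends to a permutation `h t` of the (finite) alphabet; `a :: t ↦ t ++ [h t a]` is then a
permutation of all words, extends `g`, and follows edges of the graph.
-/

/-- `deBruijnEdge n x y` holds iff `(x, y)` is an edge of the `k`-ary de Bruijn
graph of order `n`: `x = a :: t` and `y = t ++ [b]` for letters `a, b` and a
word `t` of length `n - 1`. -/
def deBruijnEdge {k : ℕ} (n : ℕ) (x y : List (Fin k)) : Prop :=
  ∃ (a b : Fin k) (t : List (Fin k)), t.length = n - 1 ∧ x = a :: t ∧ y = t ++ [b]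

open Function Set

theorem Set.InjOn.exists_perm_eqOn {α : Type*} [Finite α] {s : Set α} {f : α → α}
    (hf : InjOn f s) : ∃ σ : Equiv.Perm α, EqOn σ f s := by
  classical
  refine ⟨(Equiv.Set.imageOfInjOn f s hf).extendSubtype, fun x hx => ?_⟩
  simp [Equiv.extendSubtype_apply_of_mem _ _ hx, Equiv.Set.imageOfInjOn]

-- `List.Vector α n` is by definition `{w : List α // w.length = n}`, the type of words in the theorem.
namespace List.Vector

variable {α : Type*} {m : ℕ}

@[simp]
theorem toList_snoc (xs : Vector α m) (b : α) : (xs.snoc b).toList = xs.toList ++ [b] := rfl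

theorem snoc_injective2 : Injective2 (snoc : Vector α m → α → Vector α (m + 1)) := by
  intro xs ys a b h
  have := congrArg toList h
  simp only [toList_snoc] at this
  obtain ⟨hxy, hab⟩ := List.append_inj' this rfl
  exact ⟨toList_injective hxy, by simpa using hab⟩

def rotateBy (h : Vector α m → Equiv.Perm α) (x : Vector α (m + 1)) : Vector α (m + 1) :=
  x.tail.snoc (h x.tail x.head)

theorem rotateBy_injective (h : Vector α m → Equiv.Perm α) : Injective (rotateBy h) := by
  intro x y hxy
  obtain ⟨htail, hhead⟩ := snoc_injective2 hxy
  rw [htail] at hhead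
  rw [← cons_head_tail x, ← cons_head_tail y, htail, (h _).injective hhead]

variable [Finite α]

noncomputable def rotatePerm (h : Vector α m → Equiv.Perm α) : Equiv.Perm (Vector α (m + 1)) :=
  Equiv.ofBijective (rotateBy h) (Finite.injective_iff_bijective.mp (rotateBy_injective h))

theorem rotatePerm_apply (h : Vector α m → Equiv.Perm α) (x : Vector α (m + 1)) :
    rotatePerm h x = x.tail.snoc (h x.tail x.head) :=
  rfl

theorem exists_perm_eqOn_of_forall_eq_snoc {S : Set (Vector α (m + 1))}
    {g : Vector α (m + 1) → Vector α (m + 1)} (hg : InjOn g S)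
    (hS : ∀ x ∈ S, ∃ b, g x = x.tail.snoc b) :
    ∃ π : Equiv.Perm (Vector α (m + 1)), EqOn π g S ∧ ∀ x, ∃ b, π x = x.tail.snoc b := by
  -- `x.head` is only a default value, so no nonempty alphabet is needed.
  set ℓ : Vector α (m + 1) → α := fun x => (g x).toList.getLastD x.head
  have hgℓ : ∀ x ∈ S, g x = x.tail.snoc (ℓ x) := by
    intro x hx
    obtain ⟨b, hb⟩ := hS x hx
    simp only [ℓ, hb, toList_snoc, List.getLastD_concat]
  have hinj (t : Vector α m) : InjOn (fun a => ℓ (a ::ᵥ t)) {a | a ::ᵥ t ∈ S} := by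
    intro a ha a' ha' hℓ
    have hg_eq : g (a ::ᵥ t) = g (a' ::ᵥ t) := by
      rw [hgℓ _ ha, hgℓ _ ha', tail_cons, tail_cons]
      exact congrArg _ hℓ
    simpa using congrArg head (hg ha ha' hg_eq)
  choose h hh using fun t => (hinj t).exists_perm_eqOn
  refine ⟨rotatePerm h, fun x hx => ?_, fun x => ⟨_, rotatePerm_apply h x⟩⟩
  have hmem : x.head ∈ {a | a ::ᵥ x.tail ∈ S} := by simpa [cons_head_tail]
  rw [rotatePerm_apply, hh _ hmem, hgℓ x hx]
  simp only [cons_head_tail]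

end List.Vector

open List.Vector in
theorem deBruijnEdge_iff_exists_eq_snoc {k m : ℕ} {x y : List.Vector (Fin k) (m + 1)} :
    deBruijnEdge (m + 1) x.toList y.toList ↔ ∃ b, y = x.tail.snoc b := by
  constructor
  · rintro ⟨a, b, t, -, hx, hy⟩
    refine ⟨b, toList_injective ?_⟩
    rw [toList_snoc, toList_tail, hx, hy, List.tail_cons]
  · rintro ⟨b, rfl⟩
    refine ⟨x.head, b, x.tail.toList, by simp, ?_, rfl⟩
    rw [← toList_cons, cons_head_tail]

theorem stmt_3_general (k n : ℕ) (hn : 1 ≤ n)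
    (S : Set {w : List (Fin k) // w.length = n})
    (g : {w : List (Fin k) // w.length = n} → {w : List (Fin k) // w.length = n})
    (hbij : Set.BijOn g S S)
    (hedge : ∀ x ∈ S, deBruijnEdge n x.val (g x).val) :
    ∃ π : Equiv.Perm {w : List (Fin k) // w.length = n},
      (∀ x ∈ S, π x = g x) ∧ ∀ x, deBruijnEdge n x.val (π x).val := by
  obtain ⟨m, rfl⟩ := Nat.exists_eq_add_of_le' hn
  obtain ⟨π, hπg, hπ⟩ := List.Vector.exists_perm_eqOn_of_forall_eq_snoc hbij.injOn
    fun x hx => deBruijnEdge_iff_exists_eq_snoc.mp (hedge x hx)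
  exact ⟨π, hπg, fun x => deBruijnEdge_iff_exists_eq_snoc.mpr (hπ x)⟩

theorem stmt_3 (k n : ℕ) (hk : 2 ≤ k) (hn : 1 ≤ n)
    (S : Set {w : List (Fin k) // w.length = n})
    (g : {w : List (Fin k) // w.length = n} → {w : List (Fin k) // w.length = n})
    (hbij : Set.BijOn g S S)
    (hedge : ∀ x ∈ S, deBruijnEdge n x.val (g x).val) :
    ∃ π : Equiv.Perm {w : List (Fin k) // w.length = n},
      (∀ x ∈ S, π x = g x) ∧ ∀ x, deBruijnEdge n x.val (π x).val :=
  stmt_3_general k n hn S g hbij hedge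
end

section
/- Let k ≥ 2 and n ≥ 1, and let E′ be a set of edges of the de Bruijn graph G_n^k such that for every vertex v of G_n^k, the in-degree of v in E′ equals the out-degree of v in E′, and the total degree of v in E′ is at least two (equivalently, v has at least one incoming and one outgoing edge in E′). Then there exists a set E of edges of G_n^k such that every vertex has the same in-degree and out-degree in E as in E′ (in particular |E| = |E′|), and E is connected, i.e., any two vertices of G_n^k are joined by a walk using edges of E (traversed in either direction). -/
/-- The in-degree of a vertex `v` in a finite set `E` of directed edges. -/
def inDeg {V : Type*} [DecidableEq V] (E : Finset (V × V)) (v : V) : ℕ :=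
  (E.filter (fun e => e.2 = v)).card

/-- The out-degree of a vertex `v` in a finite set `E` of directed edges. -/
def outDeg {V : Type*} [DecidableEq V] (E : Finset (V × V)) (v : V) : ℕ :=
  (E.filter (fun e => e.1 = v)).card

/-!
Swapping argument. If `E` is not weakly connected, strong connectivity of the de Bruijn graph
gives a de Bruijn edge `u → v` between two weak components of `E`. Choose `u → x` and `y → v` in
`E` and replace them by `u → v` and `y → x`; the latter is again a de Bruijn edge by the exchange
property of de Bruijn graphs, and all in- and out-degrees are unchanged. Since each weak
component of a balanced edge set is balanced, every edge lies on a directed cycle inside its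
component, so `x` still reaches `u` and `v` still reaches `y`: the swap merges the two
components without disconnecting anything. Induct on the number of weakly disconnected pairs.
-/

open Finset Relation

section BalancedEdgeSets

variable {V : Type*}

abbrev WeakReach (E : Finset (V × V)) : V → V → Prop :=
  ReflTransGen (SymmGen fun a b => (a, b) ∈ E)

variable {E F : Finset (V × V)} {u v x y : V}

lemma WeakReach.of_mem (h : (u, v) ∈ E) : WeakReach E u v :=
  .single (.of_rel h)

lemma weakReach_le_of_forall_mem (h : ∀ a b, (a, b) ∈ E → WeakReach F a b) :
    WeakReach E ≤ WeakReach F :=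
  reflTransGen_closed fun a b hab => hab.elim (h a b) fun hba => symm (h b a hba)

lemma exists_rel_not_weakReach {G : V → V → Prop} (hG : ∀ p q, ReflTransGen G p q)
    (hE : ¬ ∀ a b, WeakReach E a b) : ∃ u v, G u v ∧ ¬ WeakReach E u v := by
  by_contra! h
  exact hE fun a b => reflTransGen_closed h a b (hG a b)

variable [DecidableEq V]

def IsBalanced (E : Finset (V × V)) : Prop :=
  ∀ v, inDeg E v = outDeg E v

lemma sum_inDeg (E : Finset (V × V)) (R : Finset V) :
    ∑ v ∈ R, inDeg E v = #{e ∈ E | e.2 ∈ R} :=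
  sum_card_fiberwise_eq_card_filter _ _ _

lemma sum_outDeg (E : Finset (V × V)) (R : Finset V) :
    ∑ v ∈ R, outDeg E v = #{e ∈ E | e.1 ∈ R} :=
  sum_card_fiberwise_eq_card_filter _ _ _

lemma IsBalanced.filter_fst {P : V → Prop} [DecidablePred P] (hE : IsBalanced E)
    (hP : ∀ e ∈ E, P e.1 ↔ P e.2) : IsBalanced {e ∈ E | P e.1} := by
  intro w
  unfold inDeg outDeg
  rw [filter_filter, filter_filter]
  by_cases hw : P w
  · have hin : {e ∈ E | P e.1 ∧ e.2 = w} = {e ∈ E | e.2 = w} :=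
      filter_congr fun e he => ⟨And.right, fun h => ⟨(hP e he).2 (h ▸ hw), h⟩⟩
    have hout : {e ∈ E | P e.1 ∧ e.1 = w} = {e ∈ E | e.1 = w} :=
      filter_congr fun e _ => ⟨And.right, fun h => ⟨h ▸ hw, h⟩⟩
    rw [hin, hout]
    exact hE w
  · rw [filter_false_of_mem fun e he (h : P e.1 ∧ e.2 = w) => hw (h.2 ▸ (hP e he).1 h.1),
      filter_false_of_mem fun e _ (h : P e.1 ∧ e.1 = w) => hw (h.2 ▸ h.1)]

lemma IsBalanced.reflTransGen_erase [Fintype V] (hE : IsBalanced E) (hux : (u, x) ∈ E) :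
    ReflTransGen (fun a b => (a, b) ∈ E.erase (u, x)) x u := by
  classical
  by_contra hxu
  -- No edge leaves the set `R` of vertices reachable from `x`, so counting shows that no
  -- edge enters it either; but `(u, x)` would.
  set R : Finset V := {w | ReflTransGen (fun a b => (a, b) ∈ E.erase (u, x)) x w}
  have hout_sub_in : {e ∈ E | e.1 ∈ R} ⊆ {e ∈ E | e.2 ∈ R} := by
    intro e he
    simp only [R, mem_filter, mem_univ, true_and] at he ⊢
    refine ⟨he.1, he.2.tail (mem_erase.2 ⟨?_, he.1⟩)⟩
    rw [Ne, Prod.mk.injEq]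
    exact fun h => hxu (h.1 ▸ he.2)
  have hcard : #{e ∈ E | e.2 ∈ R} ≤ #{e ∈ E | e.1 ∈ R} := by
    rw [← sum_inDeg, ← sum_outDeg, sum_congr rfl fun v _ => hE v]
  have hx : (u, x) ∈ {e ∈ E | e.2 ∈ R} := mem_filter.2 ⟨hux, by simpa [R] using .refl⟩
  rw [← eq_of_subset_of_card_le hout_sub_in hcard] at hx
  exact hxu (by simpa [R] using (mem_filter.1 hx).2)

lemma IsBalanced.reflTransGen_erase_erase [Fintype V] (hE : IsBalanced E) (hux : (u, x) ∈ E)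
    {e : V × V} (he : ¬ WeakReach E u e.1) :
    ReflTransGen (fun a b => (a, b) ∈ (E.erase (u, x)).erase e) x u := by
  classical
  have hcomp : IsBalanced {e ∈ E | WeakReach E u e.1} :=
    hE.filter_fst (P := WeakReach E u) fun e he =>
      ⟨fun h => h.trans (WeakReach.of_mem he), fun h => h.trans (symm (WeakReach.of_mem he))⟩
  refine ReflTransGen.mono (fun a b hab => ?_) _ _ (hcomp.reflTransGen_erase (u := u) (x := x)
    (mem_filter.2 ⟨hux, .refl⟩))
  simp only [mem_erase, mem_filter] at hab ⊢
  exact ⟨fun h => he (h ▸ hab.2.2), hab.1, hab.2.1⟩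

def swapEdges (E : Finset (V × V)) (u x y v : V) : Finset (V × V) :=
  insert (u, v) (insert (y, x) ((E.erase (u, x)).erase (y, v)))

lemma sum_swapEdges (hux : (u, x) ∈ E) (hyv : (y, v) ∈ E) (huv : ¬ WeakReach E u v)
    (f : V × V → ℕ) (hf : f (u, v) + f (y, x) = f (u, x) + f (y, v)) :
    ∑ e ∈ swapEdges E u x y v, f e = ∑ e ∈ E, f e := by
  have huy : u ≠ y := by rintro rfl; exact huv (WeakReach.of_mem hyv)
  have huvE : (u, v) ∉ E := fun h => huv (WeakReach.of_mem h)
  have hyxE : (y, x) ∉ E := fun h =>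
    huv (((WeakReach.of_mem hux).trans (symm (WeakReach.of_mem h))).trans (WeakReach.of_mem hyv))
  have hyv' : (y, v) ∈ E.erase (u, x) := mem_erase.2 ⟨by simp [huy.symm], hyv⟩
  rw [swapEdges, sum_insert (by simp [huvE, huy]), sum_insert (by simp [hyxE]),
    ← add_sum_erase _ f hux, ← add_sum_erase _ f hyv']
  omega

lemma inDeg_swapEdges (hux : (u, x) ∈ E) (hyv : (y, v) ∈ E) (huv : ¬ WeakReach E u v) (w : V) :
    inDeg (swapEdges E u x y v) w = inDeg E w := by
  simp only [inDeg, card_filter]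
  exact sum_swapEdges hux hyv huv _ (by simp [add_comm])

lemma outDeg_swapEdges (hux : (u, x) ∈ E) (hyv : (y, v) ∈ E) (huv : ¬ WeakReach E u v) (w : V) :
    outDeg (swapEdges E u x y v) w = outDeg E w := by
  simp only [outDeg, card_filter]
  exact sum_swapEdges hux hyv huv _ (by simp)

/-- `x` still reaches `u`, and `v` reaches `y`, along a cycle of their balanced component that
avoids both removed edges. -/
lemma weakReach_swapEdges [Fintype V] (hE : IsBalanced E) (hux : (u, x) ∈ E) (hyv : (y, v) ∈ E)
    (huv : ¬ WeakReach E u v) : WeakReach E ≤ WeakReach (swapEdges E u x y v) := by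
  have hsub : (E.erase (u, x)).erase (y, v) ⊆ swapEdges E u x y v :=
    (subset_insert _ _).trans (subset_insert _ _)
  have hlift {a b : V} (h : ReflTransGen (fun a b => (a, b) ∈ (E.erase (u, x)).erase (y, v)) a b) :
      WeakReach (swapEdges E u x y v) a b :=
    ReflTransGen.mono (fun _ _ h => .of_rel (hsub h)) _ _ h
  have hxu := hlift <| hE.reflTransGen_erase_erase hux (e := (y, v))
    fun h => huv (h.trans (WeakReach.of_mem hyv))
  have hvy := hlift <| erase_right_comm (s := E) ▸ hE.reflTransGen_erase_erase hyv (e := (u, x))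
    fun h => huv ((symm h).trans (WeakReach.of_mem hyv))
  refine weakReach_le_of_forall_mem fun a b hab => ?_
  by_cases h₁ : (a, b) = (u, x)
  · obtain ⟨rfl, rfl⟩ := Prod.mk.inj h₁
    exact symm hxu
  by_cases h₂ : (a, b) = (y, v)
  · obtain ⟨rfl, rfl⟩ := Prod.mk.inj h₂
    exact symm hvy
  exact WeakReach.of_mem (hsub (mem_erase.2 ⟨h₂, mem_erase.2 ⟨h₁, hab⟩⟩))

lemma exists_mem_of_one_le_outDeg (h : 1 ≤ outDeg E u) : ∃ x, (u, x) ∈ E := by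
  obtain ⟨e, he⟩ := card_pos.1 h
  rw [mem_filter] at he
  exact ⟨e.2, he.2 ▸ he.1⟩

lemma exists_mem_of_one_le_inDeg (h : 1 ≤ inDeg E v) : ∃ y, (y, v) ∈ E := by
  obtain ⟨e, he⟩ := card_pos.1 h
  rw [mem_filter] at he
  exact ⟨e.1, he.2 ▸ he.1⟩

theorem exists_weakReach_of_exchange [Fintype V] {G : V → V → Prop}
    (hG : ∀ p q, ReflTransGen G p q) (hexch : ∀ u v x y, G u x → G y v → G u v → G y x)
    (E : Finset (V × V)) (hEG : ∀ e ∈ E, G e.1 e.2) (hE : IsBalanced E)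
    (hin : ∀ w, 1 ≤ inDeg E w) :
    ∃ F : Finset (V × V), (∀ e ∈ F, G e.1 e.2) ∧
      (∀ w, inDeg F w = inDeg E w ∧ outDeg F w = outDeg E w) ∧ ∀ a b, WeakReach F a b := by
  by_cases hconn : ∀ a b, WeakReach E a b
  · exact ⟨E, hEG, fun _ => ⟨rfl, rfl⟩, hconn⟩
  obtain ⟨u, v, hGuv, huv⟩ := exists_rel_not_weakReach hG hconn
  obtain ⟨x, hux⟩ := exists_mem_of_one_le_outDeg (hE u ▸ hin u)
  obtain ⟨y, hyv⟩ := exists_mem_of_one_le_inDeg (hin v)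
  have hin' := inDeg_swapEdges hux hyv huv
  have hout' := outDeg_swapEdges hux hyv huv
  have hlt : {p : V × V | ¬ WeakReach (swapEdges E u x y v) p.1 p.2}.ncard <
      {p : V × V | ¬ WeakReach E p.1 p.2}.ncard := by
    refine Set.ncard_lt_ncard ⟨fun p hp h => hp (weakReach_swapEdges hE hux hyv huv _ _ h), ?_⟩
      (Set.toFinite _)
    exact fun h => h (show (u, v) ∈ _ from huv) (.single (.of_rel (mem_insert_self _ _)))
  obtain ⟨F, hFG, hFdeg, hF⟩ := exists_weakReach_of_exchange hG hexch (swapEdges E u x y v)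
    (by simpa [swapEdges, hGuv, hexch u v x y (hEG _ hux) (hEG _ hyv) hGuv] using
      fun a b _ _ h => hEG (a, b) h)
    (fun w => by rw [hin', hout', hE w]) (fun w => hin' w ▸ hin w)
  exact ⟨F, hFG, fun w => ⟨(hFdeg w).1.trans (hin' w), (hFdeg w).2.trans (hout' w)⟩, hF⟩
termination_by {p : V × V | ¬ WeakReach E p.1 p.2}.ncard

end BalancedEdgeSets

section DeBruijn

instance (k n : ℕ) : Fintype {w : List (Fin k) // w.length = n} :=
  inferInstanceAs (Fintype (List.Vector (Fin k) n))

/-- The tail of `u` is the head of both `x` and `v`, hence also the tail of `y`. -/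
lemma deBruijnEdge_exchange {k n : ℕ} {u v x y : List (Fin k)} (hux : deBruijnEdge n u x)
    (hyv : deBruijnEdge n y v) (huv : deBruijnEdge n u v) : deBruijnEdge n y x := by
  obtain ⟨a, b, t, ht, rfl, rfl⟩ := hux
  obtain ⟨a', b', t', -, rfl, hv⟩ := hyv
  obtain ⟨a'', b'', t'', -, hu, rfl⟩ := huv
  obtain ⟨-, rfl⟩ := List.cons.inj hu
  obtain ⟨rfl, -⟩ := List.append_inj' hv rfl
  exact ⟨a', b, t, ht, rfl, rfl⟩

lemma deBruijnEdge_drop_append_take {k n : ℕ} {p q : List (Fin k)} (hp : p.length = n)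
    (hq : q.length = n) {i : ℕ} (hi : i < n) :
    deBruijnEdge n (p.drop i ++ q.take i) (p.drop (i + 1) ++ q.take (i + 1)) := by
  refine ⟨p[i], q[i], p.drop (i + 1) ++ q.take i, by simp; omega, ?_, ?_⟩
  · rw [List.drop_eq_getElem_cons, List.cons_append]
  · rw [List.take_add_one, List.getElem?_eq_getElem, List.append_assoc, Option.toList_some]

lemma reflTransGen_deBruijnEdge {k n : ℕ} (p q : {w : List (Fin k) // w.length = n}) :
    ReflTransGen (fun a b : {w : List (Fin k) // w.length = n} => deBruijnEdge n a.val b.val)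
      p q := by
  let f (i : ℕ) : {w : List (Fin k) // w.length = n} :=
    ⟨p.val.drop i ++ q.val.take i, by simp [p.2, q.2]; omega⟩
  have hf0 : f 0 = p := by simp [f]
  have hfn : f n = q := Subtype.ext (by simp [f, p.2, q.2, List.take_of_length_le])
  rw [← hf0, ← hfn]
  refine ReflTransGen.lift f (fun _ _ h => h) 0 n
    (reflTransGen_of_succ_of_le _ (fun i hi => ?_) n.zero_le)
  exact deBruijnEdge_drop_append_take p.2 q.2 hi.2

end DeBruijn

theorem stmt_4_general (k n : ℕ)
    (E' : Finset ({w : List (Fin k) // w.length = n} × {w : List (Fin k) // w.length = n}))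
    (hE' : ∀ e ∈ E', deBruijnEdge n e.1.val e.2.val)
    (hbal : ∀ v, inDeg E' v = outDeg E' v)
    (hdeg : ∀ v, 2 ≤ inDeg E' v + outDeg E' v) :
    ∃ E : Finset ({w : List (Fin k) // w.length = n} × {w : List (Fin k) // w.length = n}),
      (∀ e ∈ E, deBruijnEdge n e.1.val e.2.val) ∧
      (∀ v, inDeg E v = inDeg E' v ∧ outDeg E v = outDeg E' v) ∧
      (∀ u v, Relation.ReflTransGen (fun a b => (a, b) ∈ E ∨ (b, a) ∈ E) u v) :=
  exists_weakReach_of_exchange reflTransGen_deBruijnEdge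
    (fun _ _ _ _ => deBruijnEdge_exchange) E' hE' hbal fun v => by linarith [hbal v, hdeg v]

theorem stmt_4 (k n : ℕ) (hk : 2 ≤ k) (hn : 1 ≤ n)
    (E' : Finset ({w : List (Fin k) // w.length = n} × {w : List (Fin k) // w.length = n}))
    (hE' : ∀ e ∈ E', deBruijnEdge n e.1.val e.2.val)
    (hbal : ∀ v, inDeg E' v = outDeg E' v)
    (hdeg : ∀ v, 2 ≤ inDeg E' v + outDeg E' v) :
    ∃ E : Finset ({w : List (Fin k) // w.length = n} × {w : List (Fin k) // w.length = n}),
      (∀ e ∈ E, deBruijnEdge n e.1.val e.2.val) ∧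
      (∀ v, inDeg E v = inDeg E' v ∧ outDeg E v = outDeg E' v) ∧
      (∀ u v, Relation.ReflTransGen (fun a b => (a, b) ∈ E ∨ (b, a) ∈ E) u v) :=
  stmt_4_general k n E' hE' hbal hdeg
end

section
/- Let Σ be an alphabet of cardinality k ≥ 2, let N ≥ 1 be an integer, and let L be a nonempty subset of Σ^N (all words of L have length N). Set m = |L|, r = ⌊log_k m⌋, and v = 1 + k + k^2 + ⋯ + k^r. If N ≥ 3r + 1, then sc(L) ≤ 2v + m·(N − 2r − 1) + 1. -/
/-!
Group the nonempty left quotients `p⁻¹L` by the length `i` of `p`; level `i` has at most as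
many members as `L` has prefixes of length `i`, hence at most `min(k^i, m)`. The *excess*
`e_i = ∑ (|Q| - 1)` over the level-`i` quotients satisfies `e_i + #prefixes_i ≤ m`, and it is
nonincreasing in `i`, because a quotient `Q` at level `i < N` splits into the quotients `a⁻¹Q`,
`a ∈ Σ`, whose sizes add up to `|Q|`. At level `i` the singleton quotients are singletons of
words in `Σ^(N-i)`, and there are at most `e_i` others, so level `i` has at most
`k^(N-i) + e_i` members.

Bound levels `0, …, r` by `k^i`, levels `r+1, …, N-r-1` by `#prefixes_(N-r) ≤ m - e_(N-r)`,
levels `N-r, …, N-1` by `k^(N-i) + e_(N-r)`, and level `N` by `1`. Since `r ≤ N - 2r - 1`, the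
`r · e_(N-r)` gained at the top is paid for by the middle levels, leaving at most
`2v + m(N - 2r - 1)`; the empty quotient adds one more.
-/

/-- The state complexity of a language `L`: the number of distinct left
quotients `p⁻¹L = { s | p ++ s ∈ L }` as `p` ranges over all words (this is
the number of states of the minimal complete DFA accepting `L`, counting the
empty quotient if it occurs). -/
noncomputable def sc {α : Type*} (L : Set (List α)) : ℕ :=
  Set.ncard { Q : Set (List α) | ∃ p : List α, Q = { s | p ++ s ∈ L } }

open Finset

theorem Finset.card_le_card_biUnion_add_sum_card_sub_one {β : Type*} [DecidableEq β]
    {F : Finset (Finset β)} (hF : ∀ Q ∈ F, Q.Nonempty) :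
    #F ≤ #(F.biUnion id) + ∑ Q ∈ F, (#Q - 1) := by
  rw [← card_filter_add_card_filter_not (s := F) (fun Q => #Q = 1)]
  gcongr
  · have hsub : {Q ∈ F | #Q = 1} ⊆ (F.biUnion id).image singleton := by
      intro Q hQ
      obtain ⟨hQF, hQ1⟩ := mem_filter.mp hQ
      obtain ⟨s, rfl⟩ := card_eq_one.mp hQ1
      exact mem_image.mpr ⟨s, mem_biUnion.mpr ⟨_, hQF, mem_singleton_self s⟩, rfl⟩
    exact (card_le_card hsub).trans card_image_le
  · calc #{Q ∈ F | ¬#Q = 1} = ∑ Q ∈ F with ¬#Q = 1, 1 := card_eq_sum_ones _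
      _ ≤ ∑ Q ∈ F with ¬#Q = 1, (#Q - 1) := by
        refine sum_le_sum fun Q hQ => ?_
        have := (hF Q (mem_filter.mp hQ).1).card_pos
        have := (mem_filter.mp hQ).2
        omega
      _ ≤ ∑ Q ∈ F, (#Q - 1) := sum_le_sum_of_subset (filter_subset _ _)

theorem Finset.card_le_pow_of_forall_length_eq {α : Type*} [Fintype α] {S : Finset (List α)}
    {n : ℕ} (hS : ∀ s ∈ S, s.length = n) : #S ≤ Fintype.card α ^ n := by
  calc #S = #(S.subtype (·.length = n)) := by rw [card_subtype, filter_true_of_mem hS]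
    _ ≤ Fintype.card (List.Vector α n) := card_le_univ (α := List.Vector α n) _
    _ = Fintype.card α ^ n := card_vector n

namespace FiniteLanguage

variable {α : Type*} [DecidableEq α]

def leftQuotient (L : Finset (List α)) (p : List α) : Finset (List α) :=
  (L.filter (p <+: ·)).image (List.drop p.length)

def prefixesAt (L : Finset (List α)) (i : ℕ) : Finset (List α) :=
  L.image (List.take i)

def quotientsAt (L : Finset (List α)) (i : ℕ) : Finset (Finset (List α)) :=
  (prefixesAt L i).image (leftQuotient L)

def excess (L : Finset (List α)) (i : ℕ) : ℕ :=
  ∑ Q ∈ quotientsAt L i, (#Q - 1)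

variable {L : Finset (List α)}

@[simp]
theorem mem_leftQuotient {p s : List α} : s ∈ leftQuotient L p ↔ p ++ s ∈ L := by
  simp only [leftQuotient, mem_image, mem_filter]
  constructor
  · rintro ⟨_, ⟨hw, t, rfl⟩, rfl⟩
    rwa [List.drop_left]
  · exact fun h => ⟨p ++ s, ⟨h, List.prefix_append _ _⟩, List.drop_left⟩

theorem leftQuotient_append (p q : List α) :
    leftQuotient L (p ++ q) = leftQuotient (leftQuotient L p) q := by
  ext s
  simp [List.append_assoc]

theorem leftQuotient_nonempty_of_mem_prefixesAt {i : ℕ} {p : List α} (hp : p ∈ prefixesAt L i) :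
    (leftQuotient L p).Nonempty := by
  obtain ⟨w, hw, rfl⟩ := mem_image.mp hp
  exact ⟨w.drop i, by simpa using hw⟩

theorem nonempty_of_mem_quotientsAt {i : ℕ} {Q : Finset (List α)} (hQ : Q ∈ quotientsAt L i) :
    Q.Nonempty := by
  obtain ⟨p, hp, rfl⟩ := mem_image.mp hQ
  exact leftQuotient_nonempty_of_mem_prefixesAt hp

theorem leftQuotient_mem_quotientsAt {p : List α} (h : (leftQuotient L p).Nonempty) :
    leftQuotient L p ∈ quotientsAt L p.length := by
  obtain ⟨s, hs⟩ := h
  refine mem_image_of_mem _ (mem_image.mpr ⟨p ++ s, mem_leftQuotient.mp hs, List.take_left⟩)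

theorem card_quotientsAt_le_card_prefixesAt (i : ℕ) : #(quotientsAt L i) ≤ #(prefixesAt L i) :=
  card_image_le

theorem card_prefixesAt_mono {i j : ℕ} (hij : i ≤ j) : #(prefixesAt L i) ≤ #(prefixesAt L j) := by
  have : prefixesAt L i = (prefixesAt L j).image (List.take i) := by
    simp only [prefixesAt, image_image, Function.comp_def, List.take_take, Nat.min_eq_left hij]
  rw [this]
  exact card_image_le

theorem sum_card_leftQuotient_le {ι : Type*} {s : Finset ι} {p : ι → List α}
    (hinj : Set.InjOn p s) (hlen : ∀ i ∈ s, ∀ j ∈ s, (p i).length = (p j).length) :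
    ∑ i ∈ s, #(leftQuotient L (p i)) ≤ #L := by
  rw [← card_sigma]
  refine card_le_card_of_injOn (fun x => p x.1 ++ x.2) (fun x hx => ?_) ?_
  · exact mem_leftQuotient.mp (mem_sigma.mp hx).2
  · rintro ⟨i, u⟩ hx ⟨j, w⟩ hy h
    have hi := (mem_sigma.mp hx).1
    have hj := (mem_sigma.mp hy).1
    obtain ⟨hp, rfl⟩ := List.append_inj h (hlen i hi j hj)
    obtain rfl := hinj hi hj hp
    rfl

theorem sum_card_leftQuotient_singleton_sub_one_lt [Fintype α] (h : ∃ w ∈ L, w ≠ []) :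
    ∑ a : α, (#(leftQuotient L [a]) - 1) < #L := by
  obtain ⟨_ | ⟨a, w⟩, hw, hne⟩ := h
  · exact absurd rfl hne
  refine lt_of_lt_of_le (sum_lt_sum (fun _ _ => Nat.sub_le _ _) ⟨a, mem_univ a, ?_⟩)
    (sum_card_leftQuotient_le (fun a _ b _ h => List.singleton_injective h) (fun _ _ _ _ => rfl))
  exact Nat.sub_lt (card_pos.mpr ⟨w, by simpa using hw⟩) one_pos

section UniformLength

variable {N : ℕ} (hL : ∀ w ∈ L, w.length = N)
include hL

theorem length_of_mem_prefixesAt {i : ℕ} (hi : i ≤ N) {p : List α} (hp : p ∈ prefixesAt L i) :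
    p.length = i := by
  obtain ⟨w, hw, rfl⟩ := mem_image.mp hp
  simp [hL w hw, hi]

theorem card_prefixesAt_le_pow [Fintype α] {i : ℕ} (hi : i ≤ N) :
    #(prefixesAt L i) ≤ Fintype.card α ^ i :=
  card_le_pow_of_forall_length_eq fun _ => length_of_mem_prefixesAt hL hi

theorem length_of_mem_quotientsAt {i : ℕ} (hi : i ≤ N) {Q : Finset (List α)}
    (hQ : Q ∈ quotientsAt L i) {s : List α} (hs : s ∈ Q) : s.length = N - i := by
  obtain ⟨p, hp, rfl⟩ := mem_image.mp hQ
  have := hL _ (mem_leftQuotient.mp hs)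
  rw [List.length_append, length_of_mem_prefixesAt hL hi hp] at this
  omega

theorem excess_add_card_prefixesAt_le {i : ℕ} (hi : i ≤ N) :
    excess L i + #(prefixesAt L i) ≤ #L := by
  have hsum : ∑ p ∈ prefixesAt L i, (#(leftQuotient L p) - 1) + #(prefixesAt L i)
      = ∑ p ∈ prefixesAt L i, #(leftQuotient L p) := by
    rw [card_eq_sum_ones, ← sum_add_distrib]
    exact sum_congr rfl fun p hp =>
      Nat.sub_add_cancel (leftQuotient_nonempty_of_mem_prefixesAt hp).card_pos
  calc excess L i + #(prefixesAt L i)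
      ≤ ∑ p ∈ prefixesAt L i, (#(leftQuotient L p) - 1) + #(prefixesAt L i) := by
        gcongr
        exact sum_image_le_of_nonneg fun _ _ => Nat.zero_le _
    _ ≤ #L := hsum ▸ sum_card_leftQuotient_le (fun _ _ _ _ h => h) fun p hp q hq => by
        rw [length_of_mem_prefixesAt hL hi hp, length_of_mem_prefixesAt hL hi hq]

theorem quotientsAt_subset_singleton_of_le {i : ℕ} (hi : N ≤ i) : quotientsAt L i ⊆ {{[]}} := by
  intro Q hQ
  obtain ⟨p, hp, rfl⟩ := mem_image.mp hQ
  obtain ⟨w, hw, rfl⟩ := mem_image.mp hp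
  rw [List.take_of_length_le (by rw [hL w hw]; exact hi), mem_singleton]
  ext s
  simp only [mem_leftQuotient, mem_singleton]
  constructor
  · intro h
    have := hL _ h
    rw [List.length_append, hL w hw] at this
    exact List.length_eq_zero_iff.mp (by omega)
  · rintro rfl
    simpa using hw

theorem excess_succ_le [Fintype α] (i : ℕ) : excess L (i + 1) ≤ excess L i := by
  rcases lt_or_ge i N with hi | hi
  · have hsub : quotientsAt L (i + 1) ⊆
        (quotientsAt L i ×ˢ univ).image fun x : Finset (List α) × α => leftQuotient x.1 [x.2] := by
      intro Q hQ
      obtain ⟨p, hp, rfl⟩ := mem_image.mp hQ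
      obtain ⟨w, hw, rfl⟩ := mem_image.mp hp
      have hiw : i < w.length := hL w hw ▸ hi
      rw [List.take_add_one, List.getElem?_eq_getElem hiw, Option.toList_some,
        leftQuotient_append]
      exact mem_image.mpr ⟨(leftQuotient L (w.take i), w[i]), mem_product.mpr
        ⟨mem_image_of_mem _ (mem_image_of_mem _ hw), mem_univ _⟩, rfl⟩
    calc excess L (i + 1)
        ≤ ∑ x ∈ quotientsAt L i ×ˢ univ, (#(leftQuotient x.1 [x.2]) - 1) :=
          (sum_le_sum_of_subset hsub).trans (sum_image_le_of_nonneg fun _ _ => Nat.zero_le _)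
      _ = ∑ Q ∈ quotientsAt L i, ∑ a : α, (#(leftQuotient Q [a]) - 1) := sum_product _ _ _
      _ ≤ excess L i := by
          refine sum_le_sum fun Q hQ => Nat.le_sub_one_of_lt ?_
          refine sum_card_leftQuotient_singleton_sub_one_lt ?_
          obtain ⟨s, hs⟩ := nonempty_of_mem_quotientsAt hQ
          refine ⟨s, hs, fun h => ?_⟩
          have := length_of_mem_quotientsAt hL hi.le hQ hs
          simp only [h, List.length_nil] at this
          omega
  · refine (sum_eq_zero fun Q hQ => ?_).trans_le (Nat.zero_le _)
    rw [mem_singleton.mp (quotientsAt_subset_singleton_of_le hL (by omega) hQ), card_singleton,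
      Nat.sub_self]

theorem card_quotientsAt_le_pow_add_excess [Fintype α] {i : ℕ} (hi : i ≤ N) :
    #(quotientsAt L i) ≤ Fintype.card α ^ (N - i) + excess L i := by
  refine (card_le_card_biUnion_add_sum_card_sub_one fun _ => nonempty_of_mem_quotientsAt).trans
    (Nat.add_le_add_right (card_le_pow_of_forall_length_eq fun s hs => ?_) _)
  obtain ⟨Q, hQ, hs⟩ := mem_biUnion.mp hs
  exact length_of_mem_quotientsAt hL hi hQ hs

theorem sc_le_sum_card_quotientsAt :
    sc (L : Set (List α)) ≤ ∑ i ∈ range (N + 1), #(quotientsAt L i) + 1 := by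
  let G := insert ∅ ((range (N + 1)).biUnion (quotientsAt L))
  have hsub : { Q : Set (List α) | ∃ p, Q = { s | p ++ s ∈ (L : Set (List α)) } }
      ⊆ (↑) '' (G : Set (Finset (List α))) := by
    rintro _ ⟨p, rfl⟩
    refine ⟨leftQuotient L p, ?_, by ext; simp⟩
    rcases (leftQuotient L p).eq_empty_or_nonempty with h | h
    · exact h ▸ mem_insert_self _ _
    obtain ⟨s, hs⟩ := h
    have := hL _ (mem_leftQuotient.mp hs)
    refine mem_insert_of_mem (mem_biUnion.mpr ⟨p.length, mem_range.mpr ?_,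
      leftQuotient_mem_quotientsAt ⟨s, hs⟩⟩)
    rw [List.length_append] at this
    omega
  calc sc (L : Set (List α))
      ≤ ((↑) '' (G : Set (Finset (List α))) : Set (Set (List α))).ncard :=
        Set.ncard_le_ncard hsub (G.finite_toSet.image _)
    _ ≤ #G := (Set.ncard_image_le G.finite_toSet).trans (Set.ncard_coe_finset G).le
    _ ≤ #((range (N + 1)).biUnion (quotientsAt L)) + 1 := card_insert_le _ _
    _ ≤ ∑ i ∈ range (N + 1), #(quotientsAt L i) + 1 := by gcongr; exact card_biUnion_le

theorem sum_card_quotientsAt_Ico_le {a b : ℕ} (hb : b ≤ N) :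
    ∑ i ∈ Ico a b, #(quotientsAt L i) ≤ (b - a) * (#L - excess L b) := by
  have := excess_add_card_prefixesAt_le hL hb
  refine (sum_le_card_nsmul _ _ _ fun i hi => ?_).trans_eq (by rw [Nat.card_Ico, smul_eq_mul])
  calc #(quotientsAt L i) ≤ #(prefixesAt L i) := card_quotientsAt_le_card_prefixesAt i
    _ ≤ #(prefixesAt L b) := card_prefixesAt_mono (mem_Ico.mp hi).2.le
    _ ≤ #L - excess L b := by omega

theorem sum_card_quotientsAt_Ico_sub_le [Fintype α] {r : ℕ} (hr : r ≤ N) :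
    ∑ i ∈ Ico (N - r) N, #(quotientsAt L i)
      ≤ ∑ j ∈ Ico 1 (r + 1), Fintype.card α ^ j + r * excess L (N - r) :=
  calc ∑ i ∈ Ico (N - r) N, #(quotientsAt L i)
      ≤ ∑ i ∈ Ico (N - r) N, (Fintype.card α ^ (N - i) + excess L (N - r)) :=
        sum_le_sum fun i hi => (card_quotientsAt_le_pow_add_excess hL (mem_Ico.mp hi).2.le).trans
          (Nat.add_le_add_left (antitone_nat_of_succ_le (excess_succ_le hL) (mem_Ico.mp hi).1) _)
    _ = ∑ j ∈ Ico 1 (r + 1), Fintype.card α ^ j + r * excess L (N - r) := by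
        rw [sum_add_distrib, sum_const, Nat.card_Ico, smul_eq_mul,
          sum_Ico_reflect _ _ N.le_succ, Nat.add_sub_cancel_left,
          show N + 1 - (N - r) = r + 1 by omega, show N - (N - r) = r by omega]

theorem sum_card_quotientsAt_le [Fintype α] {r : ℕ} (hr : 3 * r + 1 ≤ N) :
    ∑ i ∈ range (N + 1), #(quotientsAt L i)
      ≤ 2 * ∑ i ∈ range (r + 1), Fintype.card α ^ i + #L * (N - 2 * r - 1) := by
  have hlow : ∑ i ∈ range (r + 1), #(quotientsAt L i) ≤ ∑ i ∈ range (r + 1), Fintype.card α ^ i :=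
    sum_le_sum fun i hi => (card_quotientsAt_le_card_prefixesAt i).trans
      (card_prefixesAt_le_pow hL (by rw [mem_range] at hi; omega))
  have hmid := sum_card_quotientsAt_Ico_le hL (a := r + 1) (b := N - r) (by omega)
  have htop := sum_card_quotientsAt_Ico_sub_le hL (r := r) (by omega)
  have hlast : #(quotientsAt L N) ≤ 1 :=
    (card_le_card (quotientsAt_subset_singleton_of_le hL le_rfl)).trans (card_singleton _).le
  have hv : ∑ i ∈ range (r + 1), Fintype.card α ^ i
      = 1 + ∑ j ∈ Ico 1 (r + 1), Fintype.card α ^ j := by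
    rw [sum_range_eq_add_Ico _ (by omega), pow_zero]
  have hM : N - r - (r + 1) = N - 2 * r - 1 := by omega
  have hrB : r * excess L (N - r) ≤ (N - 2 * r - 1) * excess L (N - r) :=
    Nat.mul_le_mul_right _ (by omega)
  have hmB : (N - 2 * r - 1) * (#L - excess L (N - r)) + (N - 2 * r - 1) * excess L (N - r)
      = #L * (N - 2 * r - 1) := by
    have := excess_add_card_prefixesAt_le hL (i := N - r) (by omega)
    rw [← mul_add, Nat.sub_add_cancel (by omega), mul_comm]
  rw [hM] at hmid
  rw [sum_range_succ, ← sum_range_add_sum_Ico _ (show N - r ≤ N by omega),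
    ← sum_range_add_sum_Ico _ (show r + 1 ≤ N - r by omega)]
  omega

end UniformLength

end FiniteLanguage

theorem stmt_7_general {α : Type*} [Fintype α]
    (k N : ℕ) (hcard : Fintype.card α = k)
    (L : Finset (List α)) (hlen : ∀ w ∈ L, w.length = N)
    (m r v : ℕ) (hm : m = L.card)
    (hv : v = ∑ i ∈ Finset.range (r + 1), k ^ i)
    (hNr : 3 * r + 1 ≤ N) :
    sc (↑L : Set (List α)) ≤ 2 * v + m * (N - 2 * r - 1) + 1 := by
  classical
  subst hcard hm hv
  exact (FiniteLanguage.sc_le_sum_card_quotientsAt hlen).trans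
    (Nat.add_le_add_right (FiniteLanguage.sum_card_quotientsAt_le hlen hNr) 1)

theorem stmt_7 {α : Type*} [Fintype α] [DecidableEq α]
    (k N : ℕ) (hk : 2 ≤ k) (hcard : Fintype.card α = k) (hN : 1 ≤ N)
    (L : Finset (List α)) (hne : L.Nonempty) (hlen : ∀ w ∈ L, w.length = N)
    (m r v : ℕ) (hm : m = L.card) (hr : r = Nat.log k m)
    (hv : v = ∑ i ∈ Finset.range (r + 1), k ^ i)
    (hNr : 3 * r + 1 ≤ N) :
    sc (↑L : Set (List α)) ≤ 2 * v + m * (N - 2 * r - 1) + 1 :=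
  stmt_7_general k N hcard L hlen m r v hm hv hNr
end

section
/- Let k ≥ 2, let N ≥ 1, and let w be a word of length N over a k-letter alphabet. Set r = ⌊log_k N⌋ and v = 1 + k + k^2 + ⋯ + k^r. Then sc(C(w)) ≤ 2v + N·(N − 2r − 1) + 1. -/
/-- `conj w` is the set of all conjugates (cyclic shifts) of the word `w`. -/
def conj {α : Type*} (w : List α) : Set (List α) :=
  { u | ∃ x y : List α, w = x ++ y ∧ u = y ++ x }

/-!
A nonempty left quotient `p⁻¹ C(w)` comes from a circular factor `p` of `w` (a prefix of a
rotation); for `|p| = ℓ` it is the set of length-`(N - ℓ)` suffixes of the rotations that begin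
with `p`. Writing `c ℓ` for the number of circular factors of length `ℓ` and `G ≤ N` for the
number of distinct rotations, the quotients of length `ℓ` are at most `c ℓ ≤ k ^ ℓ` in number,
and also at most `c (N - ℓ) + (G - c ℓ)`: a prefix with a single completion gives a singleton
quotient made of a circular factor of length `N - ℓ`, and at most `G - c ℓ` prefixes have
several completions. Moreover `c` grows strictly until it reaches `G` (Morse–Hedlund), so
`c ℓ ≥ min (ℓ + 1) G`.

Bound the quotients by `k ^ ℓ` for `ℓ ≤ r`, by `c ℓ` for `r < ℓ < N - r`, and by
`k ^ (N - ℓ) + (G - c ℓ)` for `ℓ ≥ N - r`. The defects `G - c ℓ` vanish for `ℓ ≥ N - 1`, and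
each remaining one pairs with a middle term into at most `G ≤ N`. This needs `3 r ≤ N`; otherwise
`k = 2` and `N ≤ 8`, and the four remaining cases are checked directly.
-/

open Finset

theorem Finset.card_filter_one_lt_card_fiber_add_card_image_le {β γ : Type*} [DecidableEq γ]
    (s : Finset β) (f : β → γ) :
    #{b ∈ s.image f | 1 < #{a ∈ s | f a = b}} + #(s.image f) ≤ #s := by
  rw [card_eq_sum_card_image f s, card_filter, card_eq_sum_ones, ← sum_add_distrib]
  refine sum_le_sum fun b hb ↦ ?_
  obtain ⟨a, ha, rfl⟩ := Finset.mem_image.1 hb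
  have : 0 < #{a' ∈ s | f a' = f a} := card_pos.2 ⟨a, mem_filter.2 ⟨ha, rfl⟩⟩
  split <;> omega

namespace ConjugateStateComplexity

section Words

open List

variable {α : Type*}

def leftQuotient (L : Set (List α)) (p : List α) : Set (List α) := {s | p ++ s ∈ L}

theorem sc_eq_ncard_range (L : Set (List α)) : sc L = (Set.range (leftQuotient L)).ncard := by
  simp only [sc, Set.range, leftQuotient, eq_comm]

theorem mem_conj_iff {w u : List α} : u ∈ conj w ↔ u ~r w := by
  constructor
  · rintro ⟨x, y, rfl, rfl⟩
    exact isRotated_append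
  · intro h
    obtain ⟨n, hn, rfl⟩ := isRotated_iff_mod.1 h.symm
    exact ⟨w.take n, w.drop n, (take_append_drop n w).symm, rotate_eq_drop_append_take hn⟩

theorem take_rotate_one {u : List α} {ℓ : ℕ} (h : ℓ < u.length) :
    (u.rotate 1).take ℓ = (u.take (ℓ + 1)).drop 1 := by
  rw [rotate_eq_drop_append_take (by omega), take_append_of_le_length (by simp; omega),
    drop_take]
  simp

variable [DecidableEq α] {w : List α}

def rotations (w : List α) : Finset (List α) := w.cyclicPermutations.toFinset

@[simp]
theorem mem_rotations {u : List α} : u ∈ rotations w ↔ u ~r w := by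
  simp [rotations, mem_cyclicPermutations_iff]

theorem coe_rotations : (rotations w : Set (List α)) = conj w := by
  ext; simp [mem_conj_iff]

theorem length_of_mem_rotations {u : List α} (hu : u ∈ rotations w) : u.length = w.length :=
  (mem_rotations.1 hu).perm.length_eq

theorem rotate_mem_rotations {u : List α} (hu : u ∈ rotations w) (n : ℕ) :
    u.rotate n ∈ rotations w :=
  mem_rotations.2 ((IsRotated.forall u n).trans (mem_rotations.1 hu))

theorem card_rotations_le (hw : w ≠ []) : #(rotations w) ≤ w.length :=
  (toFinset_card_le _).trans (length_cyclicPermutations_of_ne_nil w hw).le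

theorem injOn_take_rotations {ℓ : ℕ}
    (hext : ∀ u ∈ rotations w, ∀ v ∈ rotations w,
      u.take ℓ = v.take ℓ → u.take (ℓ + 1) = v.take (ℓ + 1)) :
    Set.InjOn (take ℓ) (rotations w : Set (List α)) := by
  intro u hu v hv huv
  have hlu := length_of_mem_rotations hu
  have hlv := length_of_mem_rotations hv
  rcases le_or_gt w.length ℓ with hℓ | hℓ
  · rwa [take_of_length_le (by omega), take_of_length_le (by omega)] at huv
  -- the window of length `ℓ` slides along the rotations, each step being forced by `hext`
  have hslide : ∀ t, (u.rotate t).take ℓ = (v.rotate t).take ℓ := by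
    intro t
    induction t with
    | zero => simpa using huv
    | succ t ih =>
      rw [← rotate_rotate, ← rotate_rotate, take_rotate_one (by simp; omega),
        take_rotate_one (by simp; omega),
        hext _ (rotate_mem_rotations hu t) _ (rotate_mem_rotations hv t) ih]
  refine ext_getElem? fun t ↦ ?_
  rcases lt_or_ge t w.length with ht | ht
  · have := congrArg head? (hext _ (rotate_mem_rotations hu t) _ (rotate_mem_rotations hv t)
      (hslide t))
    rwa [head?_take, head?_take, if_neg (by omega), if_neg (by omega), head?_rotate (by omega),
      head?_rotate (by omega)] at this
  · rw [getElem?_eq_none (by omega), getElem?_eq_none (by omega)]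

def cyclicFactors (w : List α) (ℓ : ℕ) : Finset (List α) := (rotations w).image (take ℓ)

theorem cyclicFactors_zero : cyclicFactors w 0 = {[]} := by
  obtain ⟨u, hu⟩ : (rotations w).Nonempty := ⟨w, mem_rotations.2 (IsRotated.refl w)⟩
  ext p
  simp only [cyclicFactors, take_zero, Finset.mem_image, Finset.mem_singleton]
  exact ⟨fun ⟨_, _, h⟩ ↦ h.symm, fun h ↦ ⟨u, hu, h.symm⟩⟩

theorem cyclicFactors_eq_image_take {a b : ℕ} (hab : a ≤ b) :
    cyclicFactors w a = (cyclicFactors w b).image (take a) := by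
  simp only [cyclicFactors, image_image, Function.comp_def, take_take, Nat.min_eq_left hab]

theorem card_cyclicFactors_mono : Monotone fun ℓ ↦ #(cyclicFactors w ℓ) := fun _ _ hab ↦
  (congrArg card (cyclicFactors_eq_image_take hab)).trans_le card_image_le

theorem card_cyclicFactors_le_card_rotations (ℓ : ℕ) :
    #(cyclicFactors w ℓ) ≤ #(rotations w) :=
  card_image_le

theorem card_cyclicFactors_le_pow [Fintype α] {ℓ : ℕ} (hℓ : ℓ ≤ w.length) :
    #(cyclicFactors w ℓ) ≤ Fintype.card α ^ ℓ := by
  calc #(cyclicFactors w ℓ) ≤ #((univ : Finset (Fin ℓ → α)).image ofFn) := card_le_card ?_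
    _ ≤ Fintype.card α ^ ℓ := card_image_le.trans (by simp)
  intro p hp
  obtain ⟨u, hu, rfl⟩ := Finset.mem_image.1 hp
  have hlen : (u.take ℓ).length = ℓ := by simp [length_of_mem_rotations hu, hℓ]
  generalize u.take ℓ = p at hlen ⊢
  subst hlen
  exact Finset.mem_image.2 ⟨fun i ↦ p[i], mem_univ _, ofFn_getElem⟩

theorem card_cyclicFactors_eq_of_succ_le {ℓ : ℕ}
    (h : #(cyclicFactors w (ℓ + 1)) ≤ #(cyclicFactors w ℓ)) :
    #(cyclicFactors w ℓ) = #(rotations w) := by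
  have hinj : Set.InjOn (take ℓ) (cyclicFactors w (ℓ + 1) : Set (List α)) :=
    injOn_of_card_image_eq <| le_antisymm card_image_le <| by
      rwa [← cyclicFactors_eq_image_take (Nat.le_succ ℓ)]
  refine card_image_of_injOn <| injOn_take_rotations fun u hu v hv huv ↦ hinj
    (mem_image_of_mem _ hu) (mem_image_of_mem _ hv) ?_
  simpa [take_take] using huv

theorem min_le_card_cyclicFactors (ℓ : ℕ) :
    min (ℓ + 1) #(rotations w) ≤ #(cyclicFactors w ℓ) := by
  induction ℓ with
  | zero => simp [cyclicFactors_zero]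
  | succ ℓ ih =>
    have hmono : #(cyclicFactors w ℓ) ≤ #(cyclicFactors w (ℓ + 1)) :=
      card_cyclicFactors_mono (Nat.le_succ ℓ)
    by_cases hG : #(rotations w) ≤ #(cyclicFactors w ℓ)
    · omega
    · have : ¬#(cyclicFactors w (ℓ + 1)) ≤ #(cyclicFactors w ℓ) := fun h ↦
        hG (card_cyclicFactors_eq_of_succ_le h).ge
      omega

theorem drop_mem_cyclicFactors {u : List α} (hu : u ∈ rotations w) {ℓ : ℕ}
    (hℓ : ℓ ≤ w.length) : u.drop ℓ ∈ cyclicFactors w (w.length - ℓ) := by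
  have hlen := length_of_mem_rotations hu
  refine Finset.mem_image.2 ⟨u.rotate ℓ, rotate_mem_rotations hu ℓ, ?_⟩
  rw [rotate_eq_drop_append_take (by omega)]
  exact take_left' (by simp [hlen])

theorem leftQuotient_conj {ℓ : ℕ} {p : List α} (hp : p.length = ℓ) :
    leftQuotient (conj w) p = drop ℓ '' ↑{u ∈ rotations w | u.take ℓ = p} := by
  ext s
  simp only [leftQuotient, ← coe_rotations, Set.mem_ofPred_eq, coe_filter, Set.mem_image,
    Finset.mem_coe]
  constructor
  · exact fun h ↦ ⟨p ++ s, ⟨h, take_left' hp⟩, drop_left' hp⟩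
  · rintro ⟨u, ⟨hu, rfl⟩, rfl⟩
    rwa [take_append_drop]

def quotientsOfLength (w : List α) (ℓ : ℕ) : Set (Set (List α)) :=
  leftQuotient (conj w) '' ↑(cyclicFactors w ℓ)

theorem range_leftQuotient_conj_subset :
    Set.range (leftQuotient (conj w)) ⊆
      insert ∅ (⋃ ℓ ∈ Finset.range (w.length + 1), quotientsOfLength w ℓ) := by
  rintro _ ⟨p, rfl⟩
  rcases (leftQuotient (conj w) p).eq_empty_or_nonempty with h | ⟨s, hs⟩
  · exact Or.inl h
  have hps : p ++ s ∈ rotations w := by rw [← Finset.mem_coe, coe_rotations]; exact hs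
  have hlen := length_of_mem_rotations hps
  rw [length_append] at hlen
  refine Or.inr <| Set.mem_biUnion (x := p.length) (by simp; omega) ⟨p, ?_, rfl⟩
  exact Finset.mem_image.2 ⟨p ++ s, hps, take_left' rfl⟩

theorem sc_conj_le : sc (conj w) ≤
    1 + ∑ ℓ ∈ Finset.range (w.length + 1), (quotientsOfLength w ℓ).ncard := by
  have hfin : (⋃ ℓ ∈ Finset.range (w.length + 1), quotientsOfLength w ℓ).Finite :=
    (Finset.finite_toSet _).biUnion fun ℓ _ ↦ (Finset.finite_toSet _).image _
  rw [sc_eq_ncard_range, add_comm]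
  calc _ ≤ _ := Set.ncard_le_ncard range_leftQuotient_conj_subset (hfin.insert ∅)
    _ ≤ _ := Set.ncard_insert_le _ _
    _ ≤ _ := Nat.add_le_add_right (set_ncard_biUnion_le _ _) 1

theorem ncard_quotientsOfLength_le_card_cyclicFactors (ℓ : ℕ) :
    (quotientsOfLength w ℓ).ncard ≤ #(cyclicFactors w ℓ) :=
  (Set.ncard_image_le (Finset.finite_toSet _)).trans (Set.ncard_coe_finset _).le

theorem ncard_quotientsOfLength_le {ℓ : ℕ} (hℓ : ℓ ≤ w.length) :
    (quotientsOfLength w ℓ).ncard ≤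
      #(cyclicFactors w (w.length - ℓ)) + (#(rotations w) - #(cyclicFactors w ℓ)) := by
  set ambiguous := (cyclicFactors w ℓ).filter
    fun p ↦ 1 < #{u ∈ rotations w | u.take ℓ = p}
  have hsub : quotientsOfLength w ℓ ⊆
      (fun s ↦ {s}) '' ↑(cyclicFactors w (w.length - ℓ)) ∪
        leftQuotient (conj w) '' ↑ambiguous := by
    rintro _ ⟨p, hp, rfl⟩
    obtain ⟨u, hu, rfl⟩ := Finset.mem_image.1 hp
    by_cases h1 : 1 < #{v ∈ rotations w | v.take ℓ = u.take ℓ}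
    · exact Or.inr ⟨_, mem_filter.2 ⟨hp, h1⟩, rfl⟩
    have hfiber : {v ∈ rotations w | v.take ℓ = u.take ℓ} = {u} :=
      eq_singleton_iff_unique_mem.2 ⟨mem_filter.2 ⟨hu, rfl⟩, fun v hv ↦
        card_le_one.1 (by omega) v hv u (mem_filter.2 ⟨hu, rfl⟩)⟩
    refine Or.inl ⟨u.drop ℓ, drop_mem_cyclicFactors hu hℓ, ?_⟩
    rw [leftQuotient_conj (ℓ := ℓ) (by simp [length_of_mem_rotations hu, hℓ]), hfiber]
    simp
  have hambiguous : #ambiguous + #(cyclicFactors w ℓ) ≤ #(rotations w) :=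
    card_filter_one_lt_card_fiber_add_card_image_le _ _
  calc _ ≤ _ := Set.ncard_le_ncard hsub (((Finset.finite_toSet _).image _).union
          ((Finset.finite_toSet _).image _))
    _ ≤ _ := Set.ncard_union_le _ _
    _ ≤ #(cyclicFactors w (w.length - ℓ)) + #ambiguous := add_le_add
          ((Set.ncard_image_le (Finset.finite_toSet _)).trans (Set.ncard_coe_finset _).le)
          ((Set.ncard_image_le (Finset.finite_toSet _)).trans (Set.ncard_coe_finset _).le)
    _ ≤ _ := by omega

end Words

theorem eq_two_and_le_three_of_pow_lt_three_mul {k r : ℕ} (hk : 2 ≤ k) (h : k ^ r < 3 * r) :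
    k = 2 ∧ r ≤ 3 := by
  have hr3 : r ≤ 3 := by
    by_contra! hr4
    have h4 : 2 ^ r = 2 ^ 2 * 2 ^ (r - 2) := by rw [← pow_add, Nat.add_sub_cancel' (by omega)]
    have := Nat.lt_two_pow_self (n := r - 2)
    have := Nat.pow_le_pow_left hk r
    omega
  refine ⟨le_antisymm ?_ hk, hr3⟩
  by_contra! hk3
  have := Nat.pow_le_pow_left (show 3 ≤ k by omega) r
  interval_cases r <;> norm_num at * <;> omega

/-- `c ℓ` stands for the number of circular factors of length `ℓ`, `q ℓ` for the number of
nonempty left quotients by words of length `ℓ`, and `G` for the number of distinct rotations. -/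
structure CountBounds (N G k : ℕ) (c q : ℕ → ℕ) : Prop where
  card_le : G ≤ N
  mono : Monotone c
  le_card : ∀ ℓ, c ℓ ≤ G
  le_pow : ∀ ℓ ≤ N, c ℓ ≤ k ^ ℓ
  min_le : ∀ ℓ, min (ℓ + 1) G ≤ c ℓ
  q_le : ∀ ℓ, q ℓ ≤ c ℓ
  q_le_reflect : ∀ ℓ ≤ N, q ℓ ≤ c (N - ℓ) + (G - c ℓ)

namespace CountBounds

variable {N G k : ℕ} {c q : ℕ → ℕ}

theorem sum_middle_add_sum_defect_le (h : CountBounds N G k c q) {r m : ℕ}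
    (hN : N = r + 1 + m + r) (hrm : r - 1 ≤ m) :
    ∑ i ∈ range m, q (r + 1 + i) + ∑ j ∈ range (r + 1), (G - c (r + 1 + m + j)) ≤ m * N := by
  have hG := h.card_le
  have hdefect : ∀ n, r - 1 ≤ n → ∑ j ∈ range n, (G - c (r + 1 + m + j)) =
      ∑ j ∈ range (r - 1), (G - c (r + 1 + m + j)) := by
    refine fun n hn ↦ (sum_subset (range_subset_range.2 hn) fun j _ hj ↦ ?_).symm
    have := h.min_le (r + 1 + m + j)
    simp only [mem_range] at hj
    omega
  rw [hdefect _ (by omega), ← hdefect m hrm, ← sum_add_distrib]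
  calc _ ≤ ∑ _i ∈ range m, N := sum_le_sum fun i _ ↦ by
          have := h.q_le (r + 1 + i)
          have := h.mono (show r + 1 + i ≤ r + 1 + m + i by omega)
          have := h.le_card (r + 1 + m + i)
          omega
    _ = m * N := by simp

theorem sum_le_of_three_mul_le (h : CountBounds N G k c q) {r : ℕ} (hN : 0 < N)
    (hr : 3 * r ≤ N) :
    ∑ ℓ ∈ range (N + 1), q ℓ ≤ 2 * ∑ i ∈ range (r + 1), k ^ i + N * (N - 2 * r - 1) := by
  obtain ⟨m, rfl⟩ : ∃ m, N = r + 1 + m + r := ⟨N - 2 * r - 1, by omega⟩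
  have hhead : ∑ i ∈ range (r + 1), q i ≤ ∑ i ∈ range (r + 1), k ^ i :=
    sum_le_sum fun i hi ↦ (h.q_le i).trans (h.le_pow i (by simp at hi; omega))
  have htail : ∑ j ∈ range (r + 1), q (r + 1 + m + j) ≤
      ∑ j ∈ range (r + 1), k ^ j + ∑ j ∈ range (r + 1), (G - c (r + 1 + m + j)) := by
    rw [← sum_range_reflect (k ^ ·), ← sum_add_distrib]
    refine sum_le_sum fun j hj ↦ ?_
    simp only [mem_range] at hj
    have := h.q_le_reflect (r + 1 + m + j) (by omega)
    have := h.le_pow (r + 1 - 1 - j) (by omega)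
    rw [show r + 1 + m + r - (r + 1 + m + j) = r + 1 - 1 - j by omega] at *
    omega
  have hmid := h.sum_middle_add_sum_defect_le rfl (by omega)
  rw [show r + 1 + m + r + 1 = r + 1 + m + (r + 1) by omega, sum_range_add _ (r + 1 + m),
    sum_range_add _ (r + 1), show r + 1 + m + r - 2 * r - 1 = m by omega]
  linarith

theorem sum_le_of_lt_three_mul (h : CountBounds N G k c q) {r : ℕ} (hk : 2 ≤ k)
    (hkr : k ^ r ≤ N) (hr : N < 3 * r) :
    ∑ ℓ ∈ range (N + 1), q ℓ ≤ 2 * ∑ i ∈ range (r + 1), k ^ i + N * (N - 2 * r - 1) := by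
  obtain ⟨rfl, hr3⟩ := eq_two_and_le_three_of_pow_lt_three_mul hk (hkr.trans_lt hr)
  have hG := h.card_le
  have hle (ℓ : ℕ) := And.intro (h.q_le ℓ) <| And.intro (h.q_le_reflect ℓ) <|
    And.intro (h.le_pow ℓ) <| And.intro (h.min_le ℓ) <| And.intro (h.le_card ℓ) <|
      h.mono (Nat.le_add_right ℓ 1)
  have := hle 0; have := hle 1; have := hle 2; have := hle 3; have := hle 4
  have := hle 5; have := hle 6; have := hle 7; have := hle 8
  interval_cases r <;> interval_cases N <;>
    simp only [sum_range_succ, sum_range_zero, Nat.reduceAdd, Nat.reduceSub, Nat.reducePow,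
      Nat.reduceMul, Nat.reduceLeDiff, forall_const, false_implies, true_and] at * <;>
    omega

theorem sum_le (h : CountBounds N G k c q) {r : ℕ} (hk : 2 ≤ k) (hN : 0 < N)
    (hkr : k ^ r ≤ N) :
    ∑ ℓ ∈ range (N + 1), q ℓ ≤ 2 * ∑ i ∈ range (r + 1), k ^ i + N * (N - 2 * r - 1) := by
  rcases le_or_gt (3 * r) N with hr | hr
  · exact h.sum_le_of_three_mul_le hN hr
  · exact h.sum_le_of_lt_three_mul hk hkr hr

end CountBounds

variable {α : Type*} [DecidableEq α] {w : List α}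

theorem countBounds [Fintype α] (hw : w ≠ []) :
    CountBounds w.length #(rotations w) (Fintype.card α) (fun ℓ ↦ #(cyclicFactors w ℓ))
      (fun ℓ ↦ (quotientsOfLength w ℓ).ncard) where
  card_le := card_rotations_le hw
  mono := card_cyclicFactors_mono
  le_card := card_cyclicFactors_le_card_rotations
  le_pow _ := card_cyclicFactors_le_pow
  min_le := min_le_card_cyclicFactors
  q_le := ncard_quotientsOfLength_le_card_cyclicFactors
  q_le_reflect _ := ncard_quotientsOfLength_le

end ConjugateStateComplexity

open ConjugateStateComplexity in
theorem stmt_9 (k N : ℕ) (hk : 2 ≤ k) (hN : 1 ≤ N)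
    (w : List (Fin k)) (hw : w.length = N)
    (r v : ℕ) (hr : r = Nat.log k N)
    (hv : v = ∑ i ∈ Finset.range (r + 1), k ^ i) :
    sc (conj w) ≤ 2 * v + N * (N - 2 * r - 1) + 1 := by
  subst hw hr hv
  have hbounds := countBounds (List.ne_nil_of_length_pos hN)
  rw [Fintype.card_fin] at hbounds
  have := hbounds.sum_le hk hN (Nat.pow_log_le_self k (by omega))
  have := sc_conj_le (w := w)
  omega
end

section
/- Let k ≥ 2, let N ≥ 1, let Σ be a k-letter alphabet, and let a ∈ Σ be a letter. Then sc(C(a^N)) = N + 2, and for every word w of length N over Σ one has sc(C(w)) ≥ N + 2; that is, the minimum of sc(C(w)) over all words w of length N is N + 2, attained at words of the form a^N. -/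
lemma mem_conj_self {α : Type*} (w : List α) : w ∈ conj w :=
  ⟨w, [], by simp, by simp⟩

lemma length_of_mem_conj {α : Type*} {w u : List α} (h : u ∈ conj w) :
    u.length = w.length := by
  obtain ⟨x, y, hw, hu⟩ := h
  subst hw; subst hu
  simp [Nat.add_comm]

lemma conj_replicate {α : Type*} (N : ℕ) (a : α) :
    conj (List.replicate N a) = {List.replicate N a} := by
  ext u
  constructor
  · rintro ⟨x, y, hw, rfl⟩
    have hall : ∀ b ∈ y ++ x, b = a := by
      intro b hb
      have : b ∈ x ++ y := by
        rcases List.mem_append.1 hb with h | h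
        · exact List.mem_append.2 (Or.inr h)
        · exact List.mem_append.2 (Or.inl h)
      rw [← hw] at this
      exact List.eq_of_mem_replicate this
    have hlen : (y ++ x).length = N := by
      have := congrArg List.length hw
      simp at this ⊢
      omega
    exact Set.mem_singleton_iff.2 (List.eq_replicate_iff.2 ⟨hlen, hall⟩)
  · rintro rfl; exact mem_conj_self _

/-- The set of quotients of any `conj w` is finite. -/
lemma quotients_finite {α : Type*} [Finite α] (w : List α) :
    { Q : Set (List α) | ∃ p : List α, Q = { s | p ++ s ∈ conj w } }.Finite := by
  refine Set.Finite.subset ((List.finite_length_le (α := α) w.length).finite_subsets) ?_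
  rintro Q ⟨p, rfl⟩
  intro s hs
  have := length_of_mem_conj hs
  simp only [List.length_append] at this
  simp only [Set.mem_setOf_eq]
  omega

theorem stmt_12 {α : Type*} [Fintype α] [DecidableEq α]
    (k N : ℕ) (hk : 2 ≤ k) (hcard : Fintype.card α = k) (hN : 1 ≤ N) (a : α) :
    sc (conj (List.replicate N a)) = N + 2 ∧
    ∀ w : List α, w.length = N → N + 2 ≤ sc (conj w) := by
  constructor
  · -- sc (conj (a^N)) = N + 2
    unfold sc
    rw [conj_replicate]
    have hset : { Q : Set (List α) | ∃ p : List α,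
        Q = { s | p ++ s ∈ ({List.replicate N a} : Set (List α)) } }
        = insert ∅ ((fun j => ({List.replicate j a} : Set (List α))) '' Set.Iic N) := by
      ext Q
      constructor
      · rintro ⟨p, rfl⟩
        by_cases hp : p.length ≤ N ∧ p = List.replicate p.length a
        · right
          obtain ⟨hple, hpeq⟩ := hp
          obtain ⟨m, rfl⟩ : ∃ m, p = List.replicate m a := ⟨p.length, hpeq⟩
          simp only [List.length_replicate] at hple
          refine ⟨N - m, Set.mem_Iic.2 (Nat.sub_le _ _), ?_⟩
          ext s
          simp only [Set.mem_setOf_eq, Set.mem_singleton_iff]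
          constructor
          · rintro rfl
            rw [← List.replicate_add]
            congr 1
            omega
          · intro h
            have hrepl : List.replicate N a =
                List.replicate m a ++ List.replicate (N - m) a := by
              rw [← List.replicate_add]
              congr 1
              omega
            rw [hrepl] at h
            exact List.append_cancel_left h
        · left
          ext s
          simp only [Set.mem_setOf_eq, Set.mem_singleton_iff, Set.mem_empty_iff_false,
            iff_false]
          intro h
          apply hp
          constructor
          · have := congrArg List.length h
            simp at this
            omega
          · rw [List.eq_replicate_length]
            intro b hb
            have : b ∈ p ++ s := List.mem_append.2 (Or.inl hb)
            rw [h] at this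
            exact List.eq_of_mem_replicate this
      · rintro (rfl | ⟨j, hj, rfl⟩)
        · refine ⟨List.replicate (N + 1) a, ?_⟩
          ext s
          simp only [Set.mem_empty_iff_false, Set.mem_setOf_eq, Set.mem_singleton_iff,
            false_iff]
          intro h
          have := congrArg List.length h
          simp at this
          omega
        · refine ⟨List.replicate (N - j) a, ?_⟩
          ext s
          simp only [Set.mem_singleton_iff, Set.mem_setOf_eq]
          constructor
          · rintro rfl
            rw [← List.replicate_add]
            congr 1
            simp only [Set.mem_Iic] at hj
            omega
          · intro h
            have hrepl : List.replicate N a =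
                List.replicate (N - j) a ++ List.replicate j a := by
              rw [← List.replicate_add]
              congr 1
              simp only [Set.mem_Iic] at hj
              omega
            rw [hrepl] at h
            exact List.append_cancel_left h
    rw [hset]
    have hinj : Function.Injective (fun j => ({List.replicate j a} : Set (List α))) := by
      intro i j h
      simp only [Set.singleton_eq_singleton_iff] at h
      have := congrArg List.length h
      simpa using this
    have hnotmem : (∅ : Set (List α)) ∉
        (fun j => ({List.replicate j a} : Set (List α))) '' Set.Iic N := by
      rintro ⟨j, _, h⟩
      exact (Set.singleton_ne_empty _) h
    rw [Set.ncard_insert_of_notMem hnotmem ((Set.finite_Iic N).image _),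
      Set.ncard_image_of_injective _ hinj]
    have : (Set.Iic N).ncard = N + 1 := by
      rw [← Finset.coe_Iic, Set.ncard_coe_finset, Nat.card_Iic]
    omega
  · -- lower bound
    intro w hw
    unfold sc
    set L := conj w with hL
    set Qset := { Q : Set (List α) | ∃ p : List α, Q = { s | p ++ s ∈ L } } with hQset
    set F : Fin (N + 2) → Set (List α) :=
      fun i => { s | (w ++ [a]).take i.val ++ s ∈ L } with hF
    have hmem : ∀ i, F i ∈ Qset := fun i => ⟨(w ++ [a]).take i.val, rfl⟩
    have htake : ∀ i : ℕ, i ≤ N → (w ++ [a]).take i = w.take i := by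
      intro i hi
      exact List.take_append_of_le_length (by omega)
    have hlen_take : ∀ i : ℕ, i ≤ N → ((w ++ [a]).take i).length = i := by
      intro i hi
      simp only [List.length_take, List.length_append, List.length_singleton, hw]
      omega
    -- for i ≤ N, drop i w ∈ F i
    have hdrop : ∀ i : Fin (N + 2), i.val ≤ N → w.drop i.val ∈ F i := by
      intro i hi
      simp only [hF, Set.mem_setOf_eq, htake i.val hi, List.take_append_drop]
      exact mem_conj_self w
    -- lengths of elements of F i for i ≤ N
    have hlen : ∀ i : Fin (N + 2), i.val ≤ N → ∀ s ∈ F i, s.length = N - i.val := by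
      intro i hi s hs
      have := length_of_mem_conj hs
      simp only [List.length_append, hlen_take i.val hi, hw] at this
      omega
    -- F (N+1) is empty
    have hempty : ∀ i : Fin (N + 2), i.val = N + 1 → F i = ∅ := by
      intro i hi
      ext s
      simp only [hF, Set.mem_setOf_eq, Set.mem_empty_iff_false, iff_false]
      intro hs
      have := length_of_mem_conj hs
      have htk : ((w ++ [a]).take i.val).length = N + 1 := by
        simp only [List.length_take, List.length_append, List.length_singleton, hw]
        omega
      simp only [List.length_append, htk, hw] at this
      omega
    have hinjF : Function.Injective F := by
      intro i j h
      rcases Nat.lt_or_ge i.val (N + 1) with hi | hi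
      · rcases Nat.lt_or_ge j.val (N + 1) with hj | hj
        · have h1 := hlen i (by omega) _ (hdrop i (by omega))
          have h2 := hlen j (by omega) _ (by rw [← h]; exact hdrop i (by omega))
          have : i.val = j.val := by
            simp only [List.length_drop, hw] at h1 h2
            omega
          exact Fin.ext this
        · exfalso
          have hj' : j.val = N + 1 := by omega
          have := hdrop i (by omega)
          rw [h, hempty j hj'] at this
          exact this
      · rcases Nat.lt_or_ge j.val (N + 1) with hj | hj
        · exfalso
          have hi' : i.val = N + 1 := by omega
          have := hdrop j (by omega)
          rw [← h, hempty i hi'] at this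
          exact this
        · exact Fin.ext (by omega)
    have hsub : Set.range F ⊆ Qset := by
      rintro Q ⟨i, rfl⟩
      exact hmem i
    have hrange : (Set.range F).ncard = N + 2 := by
      rw [← Set.image_univ, Set.ncard_image_of_injective _ hinjF, Set.ncard_univ,
        Nat.card_eq_fintype_card, Fintype.card_fin]
    calc N + 2 = (Set.range F).ncard := hrange.symm
      _ ≤ Qset.ncard := Set.ncard_le_ncard hsub (by rw [hQset, hL]; exact quotients_finite w)
end

section
/- The hypothesis N ≥ 3r + 1 in the state complexity upper bound for uniform-length languages is optimal: over the binary alphabet Σ_2 = {0,1}, the language L = {000000, 000001, 010000, 100010, 110101, 111011} ⊆ Σ_2^6 satisfies m = |L| = 6, r = ⌊log_2 m⌋ = 2, N = 6 = 3r, and sc(L) = 22 > 21 = 2v + m·(N − 2r − 1) + 1, where v = 1 + 2 + 2^2 = 7. -/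
/-- The language `L = {000000, 000001, 010000, 100010, 110101, 111011}` over
the binary alphabet `Σ_2 = Fin 2`. -/
def counterLang : Finset (List (Fin 2)) :=
  { [0, 0, 0, 0, 0, 0], [0, 0, 0, 0, 0, 1], [0, 1, 0, 0, 0, 0],
    [1, 0, 0, 0, 1, 0], [1, 1, 0, 1, 0, 1], [1, 1, 1, 0, 1, 1] }

/-- The quotient of `counterLang` by a prefix `p`, as a computable Finset. -/
def Fq (p : List (Fin 2)) : Finset (List (Fin 2)) :=
  (counterLang.filter (fun w => p <+: w)).image (fun w => w.drop p.length)

lemma quot_eq (p : List (Fin 2)) :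
    { s | p ++ s ∈ (↑counterLang : Set (List (Fin 2))) } = ↑(Fq p) := by
  ext s
  simp only [Set.mem_setOf_eq, Finset.mem_coe, Fq, Finset.mem_image,
    Finset.mem_filter]
  constructor
  · intro h
    exact ⟨p ++ s, ⟨h, List.prefix_append p s⟩, by simp⟩
  · rintro ⟨w, ⟨hw, ⟨t, rfl⟩⟩, hd⟩
    have : t = s := by simpa using hd
    subst this
    exact hw

/-- Binary words of length exactly `n`. -/
def wordsOfLen : ℕ → Finset (List (Fin 2))
  | 0 => {[]}
  | n+1 => (wordsOfLen n).biUnion (fun w => {0 :: w, 1 :: w})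

lemma mem_wordsOfLen : ∀ (n : ℕ) (w : List (Fin 2)), w.length = n → w ∈ wordsOfLen n := by
  intro n
  induction n with
  | zero =>
    intro w h
    simp [wordsOfLen, List.eq_nil_of_length_eq_zero h]
  | succ n ih =>
    intro w h
    match w with
    | a :: t =>
      simp only [wordsOfLen, Finset.mem_biUnion]
      refine ⟨t, ih t (by simpa using h), ?_⟩
      fin_cases a <;> simp

/-- Binary words of length at most `6`. -/
def Sw : Finset (List (Fin 2)) := (Finset.range 7).biUnion wordsOfLen

lemma mem_Sw (w : List (Fin 2)) (h : w.length ≤ 6) : w ∈ Sw := by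
  exact Finset.mem_biUnion.mpr ⟨w.length, Finset.mem_range.mpr (by omega),
    mem_wordsOfLen _ w rfl⟩

lemma len_mem_counterLang (w : List (Fin 2)) (hw : w ∈ counterLang) : w.length = 6 := by
  fin_cases hw <;> rfl

lemma Fq_long (p : List (Fin 2)) (h : 6 < p.length) : Fq p = ∅ := by
  apply Finset.eq_empty_of_forall_notMem
  intro s hs
  simp only [Fq, Finset.mem_image, Finset.mem_filter] at hs
  obtain ⟨w, ⟨hw, hpre⟩, _⟩ := hs
  have := hpre.length_le
  rw [len_mem_counterLang w hw] at this
  omega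

set_option maxRecDepth 100000 in
lemma Fq_empty : Fq [0, 0, 1] = ∅ := by decide

lemma quotients_eq :
    { Q : Set (List (Fin 2)) | ∃ p : List (Fin 2),
        Q = { s | p ++ s ∈ (↑counterLang : Set (List (Fin 2))) } } =
      (fun t : Finset (List (Fin 2)) => (↑t : Set (List (Fin 2)))) '' ↑(Sw.image Fq) := by
  ext Q
  simp only [Set.mem_setOf_eq, Set.mem_image, Finset.mem_coe, Finset.mem_image]
  constructor
  · rintro ⟨p, rfl⟩
    by_cases hp : p.length ≤ 6
    · exact ⟨Fq p, ⟨p, mem_Sw p hp, rfl⟩, (quot_eq p).symm⟩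
    · refine ⟨Fq [0, 0, 1], ⟨[0, 0, 1], mem_Sw _ (by simp), rfl⟩, ?_⟩
      rw [Fq_empty]
      ext s
      simp only [Finset.coe_empty, Set.mem_empty_iff_false, Set.mem_setOf_eq, false_iff,
        Finset.mem_coe]
      intro h
      have := len_mem_counterLang _ h
      rw [List.length_append] at this
      omega
  · rintro ⟨t, ⟨p, _, rfl⟩, rfl⟩
    exact ⟨p, (quot_eq p).symm⟩

set_option maxRecDepth 100000 in
lemma card_image_Fq : (Sw.image Fq).card = 22 := by decide

lemma sc_counterLang : sc (↑counterLang : Set (List (Fin 2))) = 22 := by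
  rw [sc, quotients_eq, Set.ncard_image_of_injective _ Finset.coe_injective,
    Set.ncard_coe_finset, card_image_Fq]

theorem stmt_13 :
    counterLang.card = 6 ∧
    (∀ w ∈ counterLang, w.length = 6) ∧
    Nat.log 2 counterLang.card = 2 ∧
    (∑ i ∈ Finset.range (Nat.log 2 counterLang.card + 1), 2 ^ i) = 7 ∧
    2 * 7 + 6 * (6 - 2 * 2 - 1) + 1 = 21 ∧
    sc (↑counterLang : Set (List (Fin 2))) = 22 ∧
    21 < sc (↑counterLang : Set (List (Fin 2))) := by
  have hcard : counterLang.card = 6 := by decide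
  have hlog : Nat.log 2 counterLang.card = 2 := by
    rw [hcard]
    exact Nat.log_eq_of_pow_le_of_lt_pow (by norm_num) (by norm_num)
  refine ⟨hcard, len_mem_counterLang, hlog, ?_, by norm_num, sc_counterLang, ?_⟩
  · rw [hlog]; decide
  · rw [sc_counterLang]; norm_num
end
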